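/- Let a = a_2⋯a_{p+1} and b = b_2⋯b_{p+1} where a_j = σ_{i_j−1+j}⋯σ_j (or e if i_j = 0), b_j = σ_{l_j−1+j}⋯σ_j (or e if l_j = 0), with i_{j+1} ≥ i_j and l_{j+1} ≥ l_j for all j. Define c_j = a_j if ℓ(a_j) ≥ ℓ(b_j) and c_j = b_j otherwise, and c = c_2⋯c_{p+1}. Then c is the least common multiple of a and b with respect to right-divisibility; in particular c = a′a = b′b with a′ = a′_2⋯a′_{p+1} and b′ = b′_2⋯b′_{p+1}, where a′_j = σ_{l_j+j−1}⋯σ_{i_j+j} when l_j > i_j and a′_j = e otherwise, and symmetrically for b′_j. -/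

import Mathlib

/-!
The factors `a_j`, `b_j` are descending runs `σ_k ⋯ σ_j` ending in the same generator, so the
shorter one right-divides the longer, which is their lcm `c_j = a′_j a_j = b′_j b_j`. Monotonicity
of the indices makes every letter of `a′_j` differ by at least two from every letter of
`a_2 ⋯ a_{j-1}`; such elements commute and their lcm is their product, and with right
cancellation this lets the lcm be assembled one factor at a time.

Right cancellation and `lcm(σ_s, σ_t) = σ_s σ_t` for distant `s, t` come from Garside's argument
on words: if `σ_a u = σ_b v`, then `u` and `v` factor through the left lcm of `σ_a` and `σ_b`.
This is proved by induction on the length, following the chain of elementary braid moves from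
`a :: u` to `b :: v`; reversing words turns it into the right-handed statement.
-/

namespace ArtinStmt

/-- The alternating word π(s,t;k) = stst... of length k in the free monoid. -/
def altWord {S : Type*} (s t : S) : ℕ → FreeMonoid S
  | 0 => 1
  | n + 1 => FreeMonoid.of s * altWord t s n

/-- The braid/Artin relations coming from a Coxeter-type matrix `M`
(with `M s t = 0` encoding `∞`, i.e. no relation). -/
def artinRel {S : Type*} (M : S → S → ℕ) (x y : FreeMonoid S) : Prop :=
  ∃ s t, s ≠ t ∧ M s t ≠ 0 ∧ x = altWord s t (M s t) ∧ y = altWord t s (M s t)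

/-- The congruence on the free monoid generated by the Artin relations. -/
def artinCon {S : Type*} (M : S → S → ℕ) : Con (FreeMonoid S) := conGen (artinRel M)

/-- The Artin monoid associated to the matrix `M`. -/
abbrev ArtinMonoid {S : Type*} (M : S → S → ℕ) := (artinCon M).Quotient

/-- The generator σ_s of the Artin monoid. -/
def gen {S : Type*} (M : S → S → ℕ) (s : S) : ArtinMonoid M := (artinCon M).mk' (FreeMonoid.of s)

/-- Right-divisibility: `a ⪯R b` iff `b = c * a` for some `c`. -/
def RDvd {A : Type*} [Monoid A] (a b : A) : Prop := ∃ c, b = c * a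

/-- The Coxeter matrix of type A: m(i,j) = 3 for adjacent indices, 2 otherwise. -/
def braidM : ℕ → ℕ → ℕ := fun i j =>
  if i = j then 1 else if i + 1 = j ∨ j + 1 = i then 3 else 2

/-- The positive braid monoid (type A Artin monoid). -/
abbrev BraidMonoid := ArtinMonoid braidM

/-- The braid generator σ_i. -/
def bσ (i : ℕ) : BraidMonoid := gen braidM i

/-- The descending product σ_k σ_{k-1} ⋯ σ_j (equal to 1 if k < j). -/
def bdesc (k j : ℕ) : BraidMonoid := ((List.range' j (k + 1 - j)).reverse.map bσ).prod


/-- The factor a_j = σ_{i_j−1+j}⋯σ_j (equal to e when i_j = 0). -/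
def factorWord (i : ℕ → ℕ) (j : ℕ) : BraidMonoid :=
  if i j = 0 then 1 else bdesc (i j - 1 + j) j

/-- The product a = a_2 ⋯ a_{p+1}. -/
def factorProd (i : ℕ → ℕ) (p : ℕ) : BraidMonoid :=
  ((List.range' 2 p).map (factorWord i)).prod

/-- c_j: the longer of a_j and b_j. -/
def cWord (i l : ℕ → ℕ) (j : ℕ) : BraidMonoid :=
  if l j ≤ i j then factorWord i j else factorWord l j

/-- a′_j = σ_{l_j+j−1}⋯σ_{i_j+j} when l_j > i_j, and e otherwise. -/
def primeWord (i l : ℕ → ℕ) (j : ℕ) : BraidMonoid :=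
  if i j < l j then bdesc (l j - 1 + j) (i j + j) else 1

section RightLcm

variable {M : Type*} [Monoid M] {a b c : M}

structure IsRLcm (a b a' b' c : M) : Prop where
  eq_left : c = a' * a
  eq_right : c = b' * b
  rdvd_of_rdvd : ∀ z, RDvd a z → RDvd b z → RDvd c z

structure IsCommRLcm (a b : M) : Prop where
  comm : a * b = b * a
  rdvd_of_rdvd : ∀ z, RDvd a z → RDvd b z → RDvd (a * b) z

theorem IsCommRLcm.symm (h : IsCommRLcm a b) : IsCommRLcm b a :=
  ⟨h.comm.symm, fun z hb ha => h.comm ▸ h.rdvd_of_rdvd z ha hb⟩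

theorem IsCommRLcm.one_right (a : M) : IsCommRLcm a 1 :=
  ⟨by simp, fun _ ha _ => by simpa using ha⟩

theorem IsRLcm.one : IsRLcm (1 : M) 1 1 1 1 :=
  ⟨by simp, by simp, fun _ h _ => by simpa using h⟩

variable [IsRightCancelMul M]

theorem IsCommRLcm.mul_right (hb : IsCommRLcm a b) (hc : IsCommRLcm a c) :
    IsCommRLcm a (b * c) where
  comm := by rw [← mul_assoc, hb.comm, mul_assoc, hc.comm, mul_assoc]
  rdvd_of_rdvd z := by
    rintro ha ⟨y, rfl⟩
    obtain ⟨m, hm⟩ := hc.rdvd_of_rdvd _ ha ⟨y * b, (mul_assoc ..).symm⟩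
    have hyb : y * b = m * a :=
      mul_right_cancel (by rw [mul_assoc, mul_assoc, hm])
    obtain ⟨n, hn⟩ := hb.rdvd_of_rdvd (y * b) ⟨m, hyb⟩ ⟨y, rfl⟩
    exact ⟨n, by rw [← mul_assoc, hn, mul_assoc, mul_assoc]⟩

theorem IsCommRLcm.list_prod_right {L : List M} (h : ∀ b ∈ L, IsCommRLcm a b) :
    IsCommRLcm a L.prod := by
  induction L with
  | nil => exact .one_right a
  | cons b L ih =>
    rw [List.prod_cons]
    exact (h b (by simp)).mul_right (ih fun c hc => h c (by simp [hc]))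

theorem IsCommRLcm.rdvd_of_rdvd_mul {z : M} (h : IsCommRLcm a b) (hz : RDvd a (z * b)) :
    RDvd a z := by
  obtain ⟨m, hm⟩ := h.rdvd_of_rdvd (z * b) hz ⟨z, rfl⟩
  exact ⟨m, mul_right_cancel (by rw [hm, mul_assoc])⟩

theorem IsRLcm.mul {A B A' B' C a' b' : M} (H : IsRLcm A B A' B' C) (h : IsRLcm a b a' b' c)
    (hA : IsCommRLcm A a') (hB : IsCommRLcm B b') :
    IsRLcm (A * a) (B * b) (A' * a') (B' * b') (C * c) where
  eq_left := by
    rw [H.eq_left, h.eq_left, mul_assoc, ← mul_assoc A, hA.comm]; simp only [mul_assoc]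
  eq_right := by
    rw [H.eq_right, h.eq_right, mul_assoc, ← mul_assoc B, hB.comm]; simp only [mul_assoc]
  rdvd_of_rdvd z := by
    rintro ⟨u, rfl⟩ ⟨v, hv⟩
    obtain ⟨w, hw⟩ := h.rdvd_of_rdvd _ ⟨u * A, (mul_assoc ..).symm⟩
      ⟨v * B, hv.trans (mul_assoc ..).symm⟩
    have hwA : RDvd A w := hA.rdvd_of_rdvd_mul ⟨u, mul_right_cancel (b := a) <| by
      rw [mul_assoc, ← h.eq_left, ← hw, mul_assoc]⟩
    have hwB : RDvd B w := hB.rdvd_of_rdvd_mul ⟨v, mul_right_cancel (b := b) <| by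
      rw [mul_assoc, ← h.eq_right, ← hw, hv, mul_assoc]⟩
    obtain ⟨n, rfl⟩ := H.rdvd_of_rdvd w hwA hwB
    exact ⟨n, by rw [hw, mul_assoc]⟩

end RightLcm

def Adjacent (s t : ℕ) : Prop := s + 1 = t ∨ t + 1 = s

def Distant (s t : ℕ) : Prop := s + 1 < t ∨ t + 1 < s

theorem Adjacent.symm {s t : ℕ} (h : Adjacent s t) : Adjacent t s := Or.symm h

theorem Distant.symm {s t : ℕ} (h : Distant s t) : Distant t s := Or.symm h

theorem Adjacent.ne {s t : ℕ} (h : Adjacent s t) : s ≠ t := by unfold Adjacent at h; omega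

theorem Distant.ne {s t : ℕ} (h : Distant s t) : s ≠ t := by unfold Distant at h; omega

theorem eq_or_adjacent_or_distant (s t : ℕ) : s = t ∨ Adjacent s t ∨ Distant s t := by
  unfold Adjacent Distant; omega

inductive BraidStep : List ℕ → List ℕ → Prop
  | swap {s t : ℕ} (w : List ℕ) : Distant s t → BraidStep (s :: t :: w) (t :: s :: w)
  | braid {s t : ℕ} (w : List ℕ) : Adjacent s t → BraidStep (s :: t :: s :: w) (t :: s :: t :: w)
  | cons (c : ℕ) {x y : List ℕ} : BraidStep x y → BraidStep (c :: x) (c :: y)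

namespace BraidStep

theorem symm {x y : List ℕ} (h : BraidStep x y) : BraidStep y x := by
  induction h with
  | swap w h => exact swap w h.symm
  | braid w h => exact braid w h.symm
  | cons c _ ih => exact cons c ih

theorem length_eq {x y : List ℕ} (h : BraidStep x y) : x.length = y.length := by
  induction h <;> simp_all

theorem append_right {x y : List ℕ} (h : BraidStep x y) (z : List ℕ) :
    BraidStep (x ++ z) (y ++ z) := by
  induction h with
  | swap w h => exact swap (w ++ z) h
  | braid w h => exact braid (w ++ z) h
  | cons c _ ih => exact cons c ih

theorem append_left {x y : List ℕ} (h : BraidStep x y) (p : List ℕ) :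
    BraidStep (p ++ x) (p ++ y) := by
  induction p with
  | nil => exact h
  | cons c p ih => exact cons c ih

theorem reverse {x y : List ℕ} (h : BraidStep x y) : BraidStep x.reverse y.reverse := by
  induction h with
  | swap w h => simpa using (swap [] h.symm).append_left w.reverse
  | braid w h => simpa using (braid [] h).append_left w.reverse
  | cons c _ ih => simpa using ih.append_right [c]

end BraidStep

def BraidEquiv : List ℕ → List ℕ → Prop := Relation.ReflTransGen BraidStep

infix:50 " ≋ " => BraidEquiv

namespace BraidEquiv

variable {x y z u v : List ℕ}

theorem refl (x : List ℕ) : x ≋ x := Relation.ReflTransGen.refl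

theorem trans (h : x ≋ y) (h' : y ≋ z) : x ≋ z := Relation.ReflTransGen.trans h h'

instance : Trans BraidEquiv BraidEquiv BraidEquiv := ⟨trans⟩

theorem symm (h : x ≋ y) : y ≋ x := by
  induction h with
  | refl => exact refl x
  | tail _ hs ih => exact Relation.ReflTransGen.head hs.symm ih

theorem length_eq (h : x ≋ y) : x.length = y.length := by
  induction h with
  | refl => rfl
  | tail _ h ih => exact ih.trans h.length_eq

theorem append (h : x ≋ y) (h' : u ≋ v) : x ++ u ≋ y ++ v :=
  (h.lift (· ++ u) fun _ _ hs => hs.append_right u).trans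
    (h'.lift (y ++ ·) fun _ _ hs => hs.append_left y)

theorem cons (c : ℕ) (h : u ≋ v) : c :: u ≋ c :: v := (refl [c]).append h

theorem reverse (h : x ≋ y) : x.reverse ≋ y.reverse :=
  h.lift List.reverse fun _ _ hs => hs.reverse

theorem swap {s t : ℕ} (h : Distant s t) (w : List ℕ) : s :: t :: w ≋ t :: s :: w :=
  Relation.ReflTransGen.single (.swap w h)

theorem braid {s t : ℕ} (h : Adjacent s t) (w : List ℕ) :
    s :: t :: s :: w ≋ t :: s :: t :: w :=
  Relation.ReflTransGen.single (.braid w h)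

end BraidEquiv

theorem braidM_of_adjacent {s t : ℕ} (h : Adjacent s t) : braidM s t = 3 := by
  simp [braidM, h.ne, show s + 1 = t ∨ t + 1 = s from h]

theorem braidM_of_distant {s t : ℕ} (h : Distant s t) : braidM s t = 2 := by
  have : ¬ (s + 1 = t ∨ t + 1 = s) := by unfold Distant at h; omega
  simp only [braidM, if_neg h.ne, if_neg this]

theorem braidStep_of_artinRel {x y : FreeMonoid ℕ} (h : artinRel braidM x y) :
    BraidStep x.toList y.toList := by
  obtain ⟨s, t, hne, -, rfl, rfl⟩ := h
  rcases eq_or_adjacent_or_distant s t with rfl | hst | hst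
  · exact absurd rfl hne
  · rw [braidM_of_adjacent hst]
    exact .braid [] hst
  · rw [braidM_of_distant hst]
    exact .swap [] hst

theorem BraidStep.artinCon_ofList {x y : List ℕ} (h : BraidStep x y) :
    artinCon braidM (FreeMonoid.ofList x) (FreeMonoid.ofList y) := by
  induction h with
  | @swap s t w h =>
    refine (artinCon braidM).mul (ConGen.Rel.of (FreeMonoid.ofList [s, t])
      (FreeMonoid.ofList [t, s]) ⟨s, t, h.ne, ?_⟩) ((artinCon braidM).refl (FreeMonoid.ofList w))
    simp only [braidM_of_distant h]
    exact ⟨two_ne_zero, rfl, rfl⟩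
  | @braid s t w h =>
    refine (artinCon braidM).mul (ConGen.Rel.of (FreeMonoid.ofList [s, t, s])
      (FreeMonoid.ofList [t, s, t]) ⟨s, t, h.ne, ?_⟩) ((artinCon braidM).refl (FreeMonoid.ofList w))
    simp only [braidM_of_adjacent h]
    exact ⟨three_ne_zero, rfl, rfl⟩
  | cons c _ ih => exact (artinCon braidM).mul ((artinCon braidM).refl (FreeMonoid.of c)) ih

theorem BraidEquiv.artinCon_ofList {x y : List ℕ} (h : x ≋ y) :
    artinCon braidM (FreeMonoid.ofList x) (FreeMonoid.ofList y) := by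
  induction h with
  | refl => exact (artinCon braidM).refl _
  | tail _ hs ih => exact (artinCon braidM).trans ih hs.artinCon_ofList

theorem artinCon_braidM_iff (x y : FreeMonoid ℕ) : artinCon braidM x y ↔ x.toList ≋ y.toList := by
  refine ⟨fun h => ?_, fun h => by simpa using h.artinCon_ofList⟩
  induction h with
  | of x y h => exact .single (braidStep_of_artinRel h)
  | refl x => exact .refl _
  | symm _ ih => exact ih.symm
  | trans _ _ ih ih' => exact ih.trans ih'
  | mul _ _ ih ih' => simpa using ih.append ih'

/-- `σ_a u = σ_b v` factors through the left lcm `σ_a`, `σ_a σ_b` or `σ_a σ_b σ_a` of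
`σ_a` and `σ_b`. -/
structure LcmSplit (a : ℕ) (u : List ℕ) (b : ℕ) (v : List ℕ) : Prop where
  of_eq : a = b → u ≋ v
  of_distant : Distant a b → ∃ w, u ≋ b :: w ∧ v ≋ a :: w
  of_adjacent : Adjacent a b → ∃ w, u ≋ b :: a :: w ∧ v ≋ a :: b :: w

theorem LcmSplit.refl (a : ℕ) (u : List ℕ) : LcmSplit a u a u :=
  ⟨fun _ => .refl u, fun h => absurd rfl h.ne, fun h => absurd rfl h.ne⟩

theorem LcmSplit.of_equiv_left {a b : ℕ} {u u' v : List ℕ} (H : LcmSplit a u' b v) (h : u ≋ u') :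
    LcmSplit a u b v where
  of_eq hab := h.trans (H.of_eq hab)
  of_distant hab := let ⟨w, hu, hv⟩ := H.of_distant hab; ⟨w, h.trans hu, hv⟩
  of_adjacent hab := let ⟨w, hu, hv⟩ := H.of_adjacent hab; ⟨w, h.trans hu, hv⟩

def LcmSplitBelow (N : ℕ) : Prop :=
  ∀ a u b v, u.length < N → a :: u ≋ b :: v → LcmSplit a u b v

namespace LcmSplitBelow

variable {N : ℕ} {a b t : ℕ} {q u v : List ℕ}

theorem cancel (ih : LcmSplitBelow N) (h : a :: u ≋ a :: v) (hu : u.length < N) : u ≋ v :=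
  (ih a u a v hu h).of_eq rfl

theorem distant (ih : LcmSplitBelow N) (hab : Distant a b) (h : a :: u ≋ b :: v)
    (hu : u.length < N) : ∃ w, u ≋ b :: w ∧ v ≋ a :: w :=
  (ih a u b v hu h).of_distant hab

theorem adjacent (ih : LcmSplitBelow N) (hab : Adjacent a b) (h : a :: u ≋ b :: v)
    (hu : u.length < N) : ∃ w, u ≋ b :: a :: w ∧ v ≋ a :: b :: w :=
  (ih a u b v hu h).of_adjacent hab

theorem swap_same (ih : LcmSplitBelow N) (hat : Distant a t) (hq : q.length < N)
    (H : LcmSplit t (a :: q) a v) : t :: q ≋ v := by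
  obtain ⟨w, hq', hv⟩ := H.of_distant hat.symm
  exact ((ih.cancel hq' hq).cons t).trans hv.symm

theorem swap_distant (ih : LcmSplitBelow N) (hat : Distant a t) (hab : Distant a b)
    (hq : q.length < N) (H : LcmSplit t (a :: q) b v) :
    ∃ w, t :: q ≋ b :: w ∧ v ≋ a :: w := by
  rcases eq_or_adjacent_or_distant t b with rfl | htb | htb
  · exact ⟨q, .refl _, (H.of_eq rfl).symm⟩
  · obtain ⟨w₁, h₁, hv⟩ := H.of_adjacent htb
    obtain ⟨w₂, hq₂, hw₂⟩ := ih.distant hab h₁ hq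
    obtain ⟨w₃, hw₁, hw₃⟩ := ih.distant hat.symm hw₂
      (by have := h₁.length_eq; simp only [List.length_cons] at this; omega)
    refine ⟨t :: b :: w₃, ?_, ?_⟩
    · calc t :: q ≋ t :: b :: t :: w₃ := (hq₂.trans (hw₃.cons b)).cons t
        _ ≋ b :: t :: b :: w₃ := .braid htb w₃
    · calc v ≋ t :: b :: a :: w₃ := hv.trans ((hw₁.cons b).cons t)
        _ ≋ t :: a :: b :: w₃ := (BraidEquiv.swap hab.symm w₃).cons t
        _ ≋ a :: t :: b :: w₃ := .swap hat.symm _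
  · obtain ⟨w₁, h₁, hv⟩ := H.of_distant htb
    obtain ⟨w₂, hq₂, hw₂⟩ := ih.distant hab h₁ hq
    refine ⟨t :: w₂, ?_, ?_⟩
    · calc t :: q ≋ t :: b :: w₂ := hq₂.cons t
        _ ≋ b :: t :: w₂ := .swap htb w₂
    · calc v ≋ t :: a :: w₂ := hv.trans (hw₂.cons t)
        _ ≋ a :: t :: w₂ := .swap hat.symm w₂

theorem swap_adjacent (ih : LcmSplitBelow N) (hat : Distant a t) (hab : Adjacent a b)
    (hq : q.length < N) (H : LcmSplit t (a :: q) b v) :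
    ∃ w, t :: q ≋ b :: a :: w ∧ v ≋ a :: b :: w := by
  rcases eq_or_adjacent_or_distant t b with rfl | htb | htb
  · exact absurd hat (by unfold Adjacent Distant at *; omega)
  · obtain ⟨w₁, h₁, hv⟩ := H.of_adjacent htb
    obtain ⟨w₂, hq₂, hw₂⟩ := ih.adjacent hab h₁ hq
    have hw₁N : w₁.length < N := by
      have := h₁.length_eq; simp only [List.length_cons] at this; omega
    obtain ⟨w₃, hw₁, hw₃⟩ := ih.distant hat.symm hw₂ hw₁N
    obtain ⟨w₄, hw₂', hw₃'⟩ := ih.adjacent htb.symm hw₃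
      (by have := hq₂.length_eq; simp only [List.length_cons] at this; omega)
    refine ⟨t :: b :: a :: w₄, ?_, ?_⟩
    · calc t :: q ≋ t :: b :: a :: t :: b :: w₄ := (hq₂.trans (((hw₂'.cons a).cons b))).cons t
        _ ≋ t :: b :: t :: a :: b :: w₄ := ((BraidEquiv.swap hat _).cons b).cons t
        _ ≋ b :: t :: b :: a :: b :: w₄ := .braid htb _
        _ ≋ b :: t :: a :: b :: a :: w₄ := ((BraidEquiv.braid hab.symm _).cons t).cons b
        _ ≋ b :: a :: t :: b :: a :: w₄ := (BraidEquiv.swap hat.symm _).cons b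
    · calc v ≋ t :: b :: a :: b :: t :: w₄ := hv.trans (((hw₁.trans (hw₃'.cons a)).cons b).cons t)
        _ ≋ t :: a :: b :: a :: t :: w₄ := (BraidEquiv.braid hab.symm _).cons t
        _ ≋ a :: t :: b :: a :: t :: w₄ := .swap hat.symm _
        _ ≋ a :: t :: b :: t :: a :: w₄ := (((BraidEquiv.swap hat _).cons b).cons t).cons a
        _ ≋ a :: b :: t :: b :: a :: w₄ := (BraidEquiv.braid htb _).cons a
  · obtain ⟨w₁, h₁, hv⟩ := H.of_distant htb
    obtain ⟨w₂, hq₂, hw₂⟩ := ih.adjacent hab h₁ hq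
    refine ⟨t :: w₂, ?_, ?_⟩
    · calc t :: q ≋ t :: b :: a :: w₂ := hq₂.cons t
        _ ≋ b :: t :: a :: w₂ := .swap htb _
        _ ≋ b :: a :: t :: w₂ := (BraidEquiv.swap hat.symm _).cons b
    · calc v ≋ t :: a :: b :: w₂ := hv.trans (hw₂.cons t)
        _ ≋ a :: t :: b :: w₂ := .swap hat.symm _
        _ ≋ a :: b :: t :: w₂ := (BraidEquiv.swap htb _).cons a

theorem swap (ih : LcmSplitBelow N) (hat : Distant a t) (hq : q.length < N)
    (H : LcmSplit t (a :: q) b v) : LcmSplit a (t :: q) b v where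
  of_eq hab := by subst hab; exact ih.swap_same hat hq H
  of_distant hab := ih.swap_distant hat hab hq H
  of_adjacent hab := ih.swap_adjacent hat hab hq H

theorem braid_same (ih : LcmSplitBelow N) (hat : Adjacent a t) (hq : q.length + 1 < N)
    (H : LcmSplit t (a :: t :: q) a v) : t :: a :: q ≋ v := by
  obtain ⟨w, h, hv⟩ := H.of_adjacent hat.symm
  have hq' := ih.cancel (ih.cancel h (by simpa using hq)) (by omega)
  exact ((hq'.cons a).cons t).trans hv.symm

theorem braid_distant (ih : LcmSplitBelow N) (hat : Adjacent a t) (hab : Distant a b)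
    (hq : q.length + 1 < N) (H : LcmSplit t (a :: t :: q) b v) :
    ∃ w, t :: a :: q ≋ b :: w ∧ v ≋ a :: w := by
  rcases eq_or_adjacent_or_distant t b with rfl | htb | htb
  · exact absurd hat (by unfold Adjacent Distant at *; omega)
  · obtain ⟨w₁, h₁, hv⟩ := H.of_adjacent htb
    obtain ⟨w₂, hq₂, hw₂⟩ := ih.distant hab h₁ (by simpa using hq)
    obtain ⟨w₃, hq₃, hw₃⟩ := ih.adjacent htb hq₂ (by omega)
    have hw₁N : w₁.length < N := by
      have := h₁.length_eq; simp only [List.length_cons] at this; omega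
    obtain ⟨w₄, hw₁, hw₄⟩ := ih.adjacent hat.symm hw₂ hw₁N
    have hw₃N : w₃.length + 1 < N := by
      have := hq₃.length_eq; simp only [List.length_cons] at this; omega
    obtain ⟨w₅, hw₃', hw₄'⟩ :=
      ih.distant hab.symm (ih.cancel (hw₃.symm.trans hw₄) (by simpa using hw₃N)) (by omega)
    refine ⟨t :: b :: a :: t :: w₅, ?_, ?_⟩
    · calc t :: a :: q ≋ t :: a :: b :: t :: a :: w₅ :=
            ((hq₃.trans (((hw₃'.cons t).cons b))).cons a).cons t
        _ ≋ t :: b :: a :: t :: a :: w₅ := (BraidEquiv.swap hab _).cons t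
        _ ≋ t :: b :: t :: a :: t :: w₅ := ((BraidEquiv.braid hat _).cons b).cons t
        _ ≋ b :: t :: b :: a :: t :: w₅ := .braid htb _
    · calc v ≋ t :: b :: a :: t :: b :: w₅ :=
            hv.trans ((((hw₁.trans ((hw₄'.cons t).cons a))).cons b).cons t)
        _ ≋ t :: a :: b :: t :: b :: w₅ := (BraidEquiv.swap hab.symm _).cons t
        _ ≋ t :: a :: t :: b :: t :: w₅ := ((BraidEquiv.braid htb.symm _).cons a).cons t
        _ ≋ a :: t :: a :: b :: t :: w₅ := .braid hat.symm _
        _ ≋ a :: t :: b :: a :: t :: w₅ := ((BraidEquiv.swap hab _).cons t).cons a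
  · obtain ⟨w₁, h₁, hv⟩ := H.of_distant htb
    obtain ⟨w₂, hq₂, hw₂⟩ := ih.distant hab h₁ (by simpa using hq)
    obtain ⟨w₃, hq₃, hw₃⟩ := ih.distant htb hq₂ (by omega)
    refine ⟨t :: a :: w₃, ?_, ?_⟩
    · calc t :: a :: q ≋ t :: a :: b :: w₃ := (hq₃.cons a).cons t
        _ ≋ t :: b :: a :: w₃ := (BraidEquiv.swap hab _).cons t
        _ ≋ b :: t :: a :: w₃ := .swap htb _
    · calc v ≋ t :: a :: t :: w₃ := hv.trans ((hw₂.trans (hw₃.cons a)).cons t)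
        _ ≋ a :: t :: a :: w₃ := .braid hat.symm _

theorem braid_adjacent (ih : LcmSplitBelow N) (hat : Adjacent a t) (hab : Adjacent a b)
    (hq : q.length + 1 < N) (H : LcmSplit t (a :: t :: q) b v) :
    ∃ w, t :: a :: q ≋ b :: a :: w ∧ v ≋ a :: b :: w := by
  rcases eq_or_adjacent_or_distant t b with rfl | htb | htb
  · exact ⟨q, .refl _, (H.of_eq rfl).symm⟩
  · exact absurd hat (by unfold Adjacent at *; omega)
  · obtain ⟨w₁, h₁, hv⟩ := H.of_distant htb
    obtain ⟨w₂, hq₂, hw₂⟩ := ih.adjacent hab h₁ (by simpa using hq)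
    obtain ⟨w₃, hq₃, hw₃⟩ := ih.distant htb hq₂ (by omega)
    obtain ⟨w₄, hw₂', hw₃'⟩ := ih.adjacent hat hw₃
      (by have := hq₂.length_eq; simp only [List.length_cons] at this; omega)
    refine ⟨t :: a :: b :: w₄, ?_, ?_⟩
    · calc t :: a :: q ≋ t :: a :: b :: a :: t :: w₄ := ((hq₃.trans (hw₃'.cons b)).cons a).cons t
        _ ≋ t :: b :: a :: b :: t :: w₄ := (BraidEquiv.braid hab _).cons t
        _ ≋ b :: t :: a :: b :: t :: w₄ := .swap htb _
        _ ≋ b :: t :: a :: t :: b :: w₄ := (((BraidEquiv.swap htb.symm _).cons a).cons t).cons b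
        _ ≋ b :: a :: t :: a :: b :: w₄ := (BraidEquiv.braid hat.symm _).cons b
    · calc v ≋ t :: a :: b :: t :: a :: w₄ := hv.trans ((hw₂.trans ((hw₂'.cons b).cons a)).cons t)
        _ ≋ t :: a :: t :: b :: a :: w₄ := ((BraidEquiv.swap htb.symm _).cons a).cons t
        _ ≋ a :: t :: a :: b :: a :: w₄ := .braid hat.symm _
        _ ≋ a :: t :: b :: a :: b :: w₄ := ((BraidEquiv.braid hab _).cons t).cons a
        _ ≋ a :: b :: t :: a :: b :: w₄ := (BraidEquiv.swap htb _).cons a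

theorem braid (ih : LcmSplitBelow N) (hat : Adjacent a t) (hq : q.length + 1 < N)
    (H : LcmSplit t (a :: t :: q) b v) : LcmSplit a (t :: a :: q) b v where
  of_eq hab := by subst hab; exact ih.braid_same hat hq H
  of_distant hab := ih.braid_distant hat hab hq H
  of_adjacent hab := ih.braid_adjacent hat hab hq H

theorem succ (ih : LcmSplitBelow N) : LcmSplitBelow (N + 1) := by
  intro a u b v hu h
  generalize hx : a :: u = x at h
  induction h using Relation.ReflTransGen.head_induction_on generalizing a u with
  | refl => cases hx; exact .refl _ _
  | head hs _ ihx =>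
    subst hx
    cases hs with
    | swap w hat => exact ih.swap hat (by simpa using hu) (ihx _ _ (by simpa using hu) rfl)
    | braid w hat => exact ih.braid hat (by simpa using hu) (ihx _ _ (by simpa using hu) rfl)
    | cons c hs' =>
      exact (ihx _ _ (by simpa [← hs'.length_eq] using hu) rfl).of_equiv_left (.single hs')

end LcmSplitBelow

theorem lcmSplitBelow : ∀ N, LcmSplitBelow N
  | 0 => fun _ _ _ _ hu => absurd hu (Nat.not_lt_zero _)
  | N + 1 => (lcmSplitBelow N).succ

theorem lcmSplit_of_equiv {a b : ℕ} {u v : List ℕ} (h : a :: u ≋ b :: v) : LcmSplit a u b v :=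
  lcmSplitBelow (u.length + 1) a u b v (Nat.lt_succ_self _) h

def toBraid (w : List ℕ) : BraidMonoid := (artinCon braidM).mk' (FreeMonoid.ofList w)

theorem toBraid_append (u v : List ℕ) : toBraid (u ++ v) = toBraid u * toBraid v :=
  map_mul (artinCon braidM).mk' (FreeMonoid.ofList u) (FreeMonoid.ofList v)

theorem toBraid_singleton (s : ℕ) : toBraid [s] = bσ s := rfl

theorem toBraid_eq_toBraid_iff {u v : List ℕ} : toBraid u = toBraid v ↔ u ≋ v :=
  (Con.eq _).trans (artinCon_braidM_iff _ _)

theorem exists_toBraid_eq (x : BraidMonoid) : ∃ w, toBraid w = x := by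
  obtain ⟨f, rfl⟩ := Con.mk'_surjective (c := artinCon braidM) x
  exact ⟨f.toList, by simp [toBraid]⟩

theorem toBraid_mul_bσ_eq_iff {u v : List ℕ} {s t : ℕ} :
    toBraid u * bσ s = toBraid v * bσ t ↔ s :: u.reverse ≋ t :: v.reverse := by
  rw [← toBraid_singleton, ← toBraid_singleton, ← toBraid_append, ← toBraid_append,
    toBraid_eq_toBraid_iff]
  exact ⟨fun h => by simpa using h.reverse, fun h => by simpa using h.reverse⟩

theorem mul_bσ_right_cancel {s : ℕ} {x y : BraidMonoid} (h : x * bσ s = y * bσ s) : x = y := by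
  obtain ⟨u, rfl⟩ := exists_toBraid_eq x
  obtain ⟨v, rfl⟩ := exists_toBraid_eq y
  have := (lcmSplit_of_equiv (toBraid_mul_bσ_eq_iff.1 h)).of_eq rfl
  exact toBraid_eq_toBraid_iff.2 (by simpa using this.reverse)

instance : IsRightCancelMul BraidMonoid where
  mul_right_cancel g x y h := by
    obtain ⟨w, rfl⟩ := exists_toBraid_eq g
    induction w using List.reverseRecOn generalizing x y with
    | nil => simpa [toBraid] using h
    | append_singleton w s ih =>
      simp only [toBraid_append, toBraid_singleton, ← mul_assoc] at h
      exact ih _ _ (mul_bσ_right_cancel h)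

theorem rdvd_of_mul_bσ_eq_mul_bσ {s t : ℕ} (hst : Distant s t) {x y : BraidMonoid}
    (h : x * bσ s = y * bσ t) : RDvd (bσ t) x := by
  obtain ⟨u, rfl⟩ := exists_toBraid_eq x
  obtain ⟨v, rfl⟩ := exists_toBraid_eq y
  obtain ⟨w, hu, -⟩ := (lcmSplit_of_equiv (toBraid_mul_bσ_eq_iff.1 h)).of_distant hst
  refine ⟨toBraid w.reverse, ?_⟩
  rw [← toBraid_singleton, ← toBraid_append, toBraid_eq_toBraid_iff]
  simpa using hu.reverse

theorem bσ_mul_bσ_comm {s t : ℕ} (hst : Distant s t) : bσ s * bσ t = bσ t * bσ s := by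
  rw [← toBraid_singleton, ← toBraid_singleton, ← toBraid_append, ← toBraid_append,
    toBraid_eq_toBraid_iff]
  exact .swap hst []

theorem isCommRLcm_bσ {s t : ℕ} (hst : Distant s t) : IsCommRLcm (bσ s) (bσ t) where
  comm := bσ_mul_bσ_comm hst
  rdvd_of_rdvd z := by
    rintro ⟨x, rfl⟩ ⟨y, hy⟩
    obtain ⟨w, rfl⟩ := rdvd_of_mul_bσ_eq_mul_bσ hst hy
    exact ⟨w, by rw [mul_assoc, bσ_mul_bσ_comm hst.symm]⟩

theorem isCommRLcm_prod_map_bσ {L L' : List ℕ} (h : ∀ s ∈ L, ∀ t ∈ L', Distant s t) :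
    IsCommRLcm (L.map bσ).prod (L'.map bσ).prod :=
  .list_prod_right <| List.forall_mem_map.2 fun t ht =>
    .symm <| .list_prod_right <| List.forall_mem_map.2 fun s hs => isCommRLcm_bσ (h s hs t ht).symm

theorem isCommRLcm_bdesc {k j k' j' : ℕ} (h : k + 1 < j') :
    IsCommRLcm (bdesc k j) (bdesc k' j') :=
  isCommRLcm_prod_map_bσ fun s hs t ht => by
    simp only [List.mem_reverse, List.mem_range'_1] at hs ht
    unfold Distant; omega

theorem bdesc_mul_bdesc {k m j : ℕ} (hj : j ≤ m + 1) (hm : m ≤ k) :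
    bdesc k (m + 1) * bdesc m j = bdesc k j := by
  have hsplit := List.range'_append_1 (s := j) (m := m + 1 - j) (n := k - m)
  rw [show j + (m + 1 - j) = m + 1 by omega, show m + 1 - j + (k - m) = k + 1 - j by omega]
    at hsplit
  simp only [bdesc, ← List.prod_append, ← List.map_append, ← List.reverse_append,
    show k + 1 - (m + 1) = k - m by omega, hsplit]

theorem primeWord_mul_factorWord {i l : ℕ → ℕ} {j : ℕ} (h : i j ≤ l j) :
    primeWord i l j * factorWord i j = factorWord l j := by
  rcases h.eq_or_lt with h | h
  · simp [primeWord, factorWord, h]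
  · by_cases hi : i j = 0
    · rw [primeWord, if_pos h, factorWord, if_pos hi, factorWord, if_neg (by omega), mul_one,
        hi, zero_add]
    · rw [primeWord, if_pos h, factorWord, if_neg hi, factorWord, if_neg (by omega),
        show i j + j = i j - 1 + j + 1 by omega]
      exact bdesc_mul_bdesc (by omega) (by omega)

theorem isRLcm_factorWord (i l : ℕ → ℕ) (j : ℕ) :
    IsRLcm (factorWord i j) (factorWord l j) (primeWord i l j) (primeWord l i j) (cWord i l j) := by
  rcases le_or_gt (l j) (i j) with h | h
  · refine ⟨?_, ?_, fun _ hz _ => ?_⟩ <;> simp only [cWord, if_pos h]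
    · simp [primeWord, h.not_gt]
    · exact (primeWord_mul_factorWord h).symm
    · exact hz
  · refine ⟨?_, ?_, fun _ _ hz => ?_⟩ <;> simp only [cWord, if_neg h.not_ge]
    · exact (primeWord_mul_factorWord h.le).symm
    · simp [primeWord, h.not_gt]
    · exact hz

theorem isCommRLcm_factorProd_primeWord {i : ℕ → ℕ} {q : ℕ}
    (hi : ∀ j, 2 ≤ j → j ≤ q + 1 → i j ≤ i (j + 1)) (l : ℕ → ℕ) :
    IsCommRLcm (factorProd i q) (primeWord i l (2 + q)) := by
  unfold primeWord
  split_ifs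
  · have hmono : MonotoneOn i (Set.Icc 2 (q + 2)) :=
      monotoneOn_of_le_succ Set.ordConnected_Icc fun j _ hj hj' => by
        simp only [Set.mem_Icc, Order.succ_eq_add_one] at hj hj' ⊢
        exact hi j hj.1 (by omega)
    refine .symm <| .list_prod_right <| List.forall_mem_map.2 fun j hj => ?_
    rw [List.mem_range'_1] at hj
    have : i j ≤ i (2 + q) := hmono ⟨hj.1, by omega⟩ ⟨by omega, by omega⟩ (by omega)
    unfold factorWord
    split_ifs
    · exact .one_right _
    · exact (isCommRLcm_bdesc (by omega)).symm
  · exact .one_right _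

theorem isRLcm_factorProd (i l : ℕ → ℕ) (q : ℕ)
    (hi : ∀ j, 2 ≤ j → j ≤ q → i j ≤ i (j + 1)) (hl : ∀ j, 2 ≤ j → j ≤ q → l j ≤ l (j + 1)) :
    IsRLcm (factorProd i q) (factorProd l q) ((List.range' 2 q).map (primeWord i l)).prod
      ((List.range' 2 q).map (primeWord l i)).prod ((List.range' 2 q).map (cWord i l)).prod := by
  induction q with
  | zero => exact .one
  | succ q ih =>
    simp only [factorProd, List.range'_1_concat, List.map_append, List.prod_append,
      List.map_singleton, List.prod_singleton]
    exact (ih (fun j hj hjq => hi j hj (by omega)) (fun j hj hjq => hl j hj (by omega))).mul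
      (isRLcm_factorWord i l (2 + q)) (isCommRLcm_factorProd_primeWord hi l)
      (isCommRLcm_factorProd_primeWord hl i)

/-- With a = a_2⋯a_{p+1}, b = b_2⋯b_{p+1} built from weakly increasing index
sequences i and l, the element c = c_2⋯c_{p+1} (taking the longer factor in
each position) is the least common multiple of a and b with respect to
right-divisibility; in particular c = a′a = b′b with
a′ = a′_2⋯a′_{p+1} and b′ = b′_2⋯b′_{p+1}. -/
theorem braid_product_lcm (p : ℕ) (i l : ℕ → ℕ)
    (hi : ∀ j, 2 ≤ j → j ≤ p → i j ≤ i (j + 1))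
    (hl : ∀ j, 2 ≤ j → j ≤ p → l j ≤ l (j + 1)) :
    RDvd (factorProd i p) (((List.range' 2 p).map (cWord i l)).prod) ∧
    RDvd (factorProd l p) (((List.range' 2 p).map (cWord i l)).prod) ∧
    (∀ x : BraidMonoid, RDvd (factorProd i p) x → RDvd (factorProd l p) x →
      RDvd (((List.range' 2 p).map (cWord i l)).prod) x) ∧
    ((List.range' 2 p).map (cWord i l)).prod =
      ((List.range' 2 p).map (primeWord i l)).prod * factorProd i p ∧
    ((List.range' 2 p).map (cWord i l)).prod =
      ((List.range' 2 p).map (primeWord l i)).prod * factorProd l p := by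
  have h := isRLcm_factorProd i l p hi hl
  exact ⟨⟨_, h.eq_left⟩, ⟨_, h.eq_right⟩, h.rdvd_of_rdvd, h.eq_left, h.eq_right⟩

end ArtinStmt
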